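/- Let f0, f1 be the automatic transformations of the Mealy automaton A₄, with products written so that (f g)(u) = f(g(u)). Then the following equalities of transformations of infinite words over Fin 4 hold: f0² f0 = f0² f1 = f0²; f1 f0 f1² f0 = f1 f0 f0 and f1 f0 f1² f1 = f1 f0 f1; and for every integer p ≥ 1, f0 f1^(2p+1) f0 = f0 f1 f0. -/

import Mathlib

/-- The sequence of states visited by a Mealy automaton with transition function `tr`,
started at state `q`, while reading the infinite word `u`. -/
def stateSeq {X Q : Type*} (tr : X → Q → Q) (q : Q) (u : ℕ → X) : ℕ → Q
  | 0 => q
  | k + 1 => tr (u k) (stateSeq tr q u k)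

/-- The automatic transformation of infinite words defined by the Mealy automaton with
transition function `tr` and output function `out` at the state `q`. -/
def autTrans {X Q : Type*} (tr : X → Q → Q) (out : X → Q → X) (q : Q) (u : ℕ → X) : ℕ → X :=
  fun n => out (u n) (stateSeq tr q u n)

/-- The transformation given by a word of states: the product (composition, applied from
right to left) of the corresponding automatic transformations. -/
def wordTrans {X Q : Type*} (tr : X → Q → Q) (out : X → Q → X) (w : List Q) :
    (ℕ → X) → (ℕ → X) :=
  (w.map (autTrans tr out)).foldr (· ∘ ·) id

/-- The growth function of a Mealy automaton: `growth tr out n` is the number of distinct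
transformations of infinite words obtained as compositions of exactly `n` automatic
transformations of the automaton. -/
noncomputable def growth {X Q : Type*} (tr : X → Q → Q) (out : X → Q → X) (n : ℕ) : ℕ :=
  Set.ncard { g : (ℕ → X) → (ℕ → X) | ∃ w : List Q, w.length = n ∧ wordTrans tr out w = g }

/-- The `i`-th finite difference of a function `γ`. -/
def fdiff (γ : ℕ → ℤ) : ℕ → ℕ → ℤ
  | 0, n => γ n
  | i + 1, n => fdiff γ i n - fdiff γ i (n - 1)

/-- Output function of the automaton `A₄`: at `q0` the outputs of `(x0,x1,x2,x3)` are
`(x0,x0,x1,x1)`; at `q1` they are `(x2,x3,x0,x1)`. -/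
def a4Out : Fin 4 → Fin 2 → Fin 4 := fun x q =>
  if q = 0 then (if x = 0 then 0 else if x = 1 then 0 else 1)
  else (if x = 0 then 2 else if x = 1 then 3 else if x = 2 then 0 else 1)

/-- Transition function of the automaton `A₄`: all transitions from `q0` stay at `q0`;
from `q1` the transition goes to `q0` on reading `x0` and stays at `q1` otherwise. -/
def a4Tr : Fin 4 → Fin 2 → Fin 2 := fun x q =>
  if q = 0 then 0 else (if x = 0 then 0 else 1)

/-- The automatic transformations `f0, f1` of the automaton `A₄` at states `q0, q1`. -/
def a4F (q : Fin 2) : (ℕ → Fin 4) → (ℕ → Fin 4) := autTrans a4Tr a4Out q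

/-!
Write `x / 2` for the high bit of a letter `x : Fin 4`. Then `f0` is the letterwise map
`x ↦ x / 2`, while `f1` adds `2` (flips the high bit) up to and including the first `0` of its
input and acts as `f0` afterwards. Hence `f0 f0` is the constant word `0`, and `f1 f0 w` only
depends on the longest prefix of `w` made of letters `≥ 2`. In the third relation both inner
words start with a letter `< 2`. In the fourth, `f1 f1` fixes a word up to and including its first
letter `≠ 1`, and this determines that prefix for the image under `f1`. For the last relation, if
the first letter `< 2` of `u` is at position `m`, then `f1^(2p+1) (f0 u) = 3^m 2 1^p 0^∞`
(and `3^∞` if there is none), whose image under `f0` does not depend on `p`.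
-/

lemma a4Out_zero (x : Fin 4) : a4Out x 0 = x / 2 := by revert x; decide

lemma a4Out_one (x : Fin 4) : a4Out x 1 = x + 2 := by revert x; decide

lemma stateSeq_a4Tr_zero (u : ℕ → Fin 4) (n : ℕ) : stateSeq a4Tr 0 u n = 0 := by
  induction n with
  | zero => rfl
  | succ n ih => simp [stateSeq, ih, a4Tr]

lemma stateSeq_a4Tr_one (u : ℕ → Fin 4) (n : ℕ) :
    stateSeq a4Tr 1 u n = if ∀ k < n, u k ≠ 0 then 1 else 0 := by
  induction n with
  | zero => simp [stateSeq]
  | succ n ih =>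
    simp only [stateSeq, ih, Nat.forall_lt_succ_right]
    split_ifs <;> simp_all [a4Tr]

lemma a4F_zero_apply (u : ℕ → Fin 4) (n : ℕ) : a4F 0 u n = u n / 2 := by
  rw [a4F, autTrans, stateSeq_a4Tr_zero, a4Out_zero]

lemma a4F_one_apply (u : ℕ → Fin 4) (n : ℕ) :
    a4F 1 u n = if ∀ k < n, u k ≠ 0 then u n + 2 else u n / 2 := by
  rw [a4F, autTrans, stateSeq_a4Tr_one]
  split_ifs <;> simp [a4Out_one, a4Out_zero]

lemma a4F_one_apply_of_forall_lt_ne_zero {u : ℕ → Fin 4} {n : ℕ} (h : ∀ k < n, u k ≠ 0) :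
    a4F 1 u n = u n + 2 := by
  rw [a4F_one_apply, if_pos h]

lemma a4F_one_apply_zero (u : ℕ → Fin 4) : a4F 1 u 0 = u 0 + 2 :=
  a4F_one_apply_of_forall_lt_ne_zero (by simp)

lemma forall_lt_iff_le_of_forall_lt_of_not {p : ℕ → Prop} {m : ℕ} (hlt : ∀ k < m, p k)
    (hm : ¬ p m) (n : ℕ) : (∀ k < n, p k) ↔ n ≤ m :=
  ⟨fun h => not_lt.mp fun hmn => hm (h m hmn), fun hnm k hk => hlt k (by omega)⟩

lemma a4F_one_apply_of_first_zero {u : ℕ → Fin 4} {m : ℕ} (hne : ∀ k < m, u k ≠ 0)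
    (h0 : u m = 0) (n : ℕ) : a4F 1 u n = if n ≤ m then u n + 2 else u n / 2 := by
  simp only [a4F_one_apply, forall_lt_iff_le_of_forall_lt_of_not hne (not_not.mpr h0)]

lemma a4F_zero_a4F_zero (u : ℕ → Fin 4) : a4F 0 (a4F 0 u) = fun _ => 0 := by
  funext n
  simp only [a4F_zero_apply]
  generalize u n = x
  revert x; decide

lemma a4F_one_a4F_zero_apply (w : ℕ → Fin 4) (n : ℕ) :
    a4F 1 (a4F 0 w) n = if ∀ k < n, 2 ≤ w k then w n / 2 + 2 else 0 := by
  have half_ne_zero : ∀ x : Fin 4, x / 2 ≠ 0 ↔ 2 ≤ x := by decide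
  simp only [a4F_one_apply, a4F_zero_apply, half_ne_zero]
  split_ifs
  · rfl
  · generalize w n = x
    revert x; decide

lemma a4F_one_a4F_zero_of_head_lt_two {w : ℕ → Fin 4} (h : w 0 < 2) :
    a4F 1 (a4F 0 w) = fun n => if n = 0 then 2 else 0 := by
  funext n
  rw [a4F_one_a4F_zero_apply]
  rcases n with _ | n
  · simp only [Nat.not_lt_zero, IsEmpty.forall_iff, implies_true, if_true]
    revert h; generalize w 0 = x
    revert x; decide
  · exact if_neg fun hall => (hall 0 n.succ_pos).not_gt h

lemma a4F_one_a4F_zero_a4F_one_a4F_one_a4F_zero (u : ℕ → Fin 4) :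
    a4F 1 (a4F 0 (a4F 1 (a4F 1 (a4F 0 u)))) = a4F 1 (a4F 0 (a4F 0 u)) := by
  have head_lt_two : ∀ x : Fin 4, x / 2 < 2 ∧ x / 2 + 2 + 2 < 2 := by decide
  rw [a4F_one_a4F_zero_of_head_lt_two, a4F_one_a4F_zero_of_head_lt_two]
  · simpa only [a4F_zero_apply] using (head_lt_two (u 0)).1
  · simpa only [a4F_one_apply_zero, a4F_zero_apply] using (head_lt_two (u 0)).2

lemma a4F_one_a4F_zero_congr {w w' : ℕ → Fin 4}
    (h : ∀ n, (∀ k < n, 2 ≤ w k) ↔ (∀ k < n, 2 ≤ w' k)) :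
    a4F 1 (a4F 0 w) = a4F 1 (a4F 0 w') := by
  have half_eq_half : ∀ x y : Fin 4, (2 ≤ x ↔ 2 ≤ y) → x / 2 = y / 2 := by decide
  funext n
  simp only [a4F_one_a4F_zero_apply, h n]
  split_ifs with hn
  · have hsucc := h (n + 1)
    rw [Nat.forall_lt_succ_right, Nat.forall_lt_succ_right, and_iff_right ((h n).mpr hn),
      and_iff_right hn] at hsucc
    rw [half_eq_half _ _ hsucc]
  · rfl

lemma two_le_a4F_one_iff (x : ℕ → Fin 4) (k : ℕ) :
    2 ≤ a4F 1 x k ↔ (∀ j < k, x j ≠ 0) ∧ x k ≤ 1 := by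
  rw [a4F_one_apply]
  split_ifs with h
  · rw [and_iff_right h]
    generalize x k = y
    revert y; decide
  · refine iff_of_false ?_ fun hx => h hx.1
    generalize x k = y
    revert y; decide

lemma forall_le_two_le_a4F_one_iff (x : ℕ → Fin 4) (n : ℕ) :
    (∀ k ≤ n, 2 ≤ a4F 1 x k) ↔ (∀ k < n, x k = 1) ∧ x n ≤ 1 := by
  simp only [two_le_a4F_one_iff]
  constructor
  · intro h
    refine ⟨fun k hk => ?_, (h n le_rfl).2⟩
    have hne : x k ≠ 0 := (h n le_rfl).1 k hk
    have hle : x k ≤ 1 := (h k hk.le).2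
    revert hne hle; generalize x k = y
    revert y; decide
  · rintro ⟨hones, hn⟩ k hk
    refine ⟨fun j hj => by rw [hones j (by omega)]; decide, ?_⟩
    rcases hk.lt_or_eq with hk | rfl
    · rw [hones k hk]
    · exact hn

lemma a4F_one_a4F_one_apply_of_forall_lt_eq_one {x : ℕ → Fin 4} {n : ℕ}
    (h : ∀ k < n, x k = 1) : a4F 1 (a4F 1 x) n = x n := by
  have hx : ∀ k < n, x k ≠ 0 := fun k hk => by rw [h k hk]; decide
  have hfx : ∀ k < n, a4F 1 x k ≠ 0 := fun k hk => by
    rw [a4F_one_apply_of_forall_lt_ne_zero fun j hj => hx j (hj.trans hk), h k hk]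
    decide
  rw [a4F_one_apply_of_forall_lt_ne_zero hfx, a4F_one_apply_of_forall_lt_ne_zero hx]
  generalize x n = y
  revert y; decide

lemma forall_lt_a4F_one_a4F_one_eq_one_iff (x : ℕ → Fin 4) (n : ℕ) :
    (∀ k < n, a4F 1 (a4F 1 x) k = 1) ↔ ∀ k < n, x k = 1 := by
  induction n with
  | zero => simp
  | succ n ih =>
    simp only [Nat.forall_lt_succ_right, ih]
    exact and_congr_right fun h => by rw [a4F_one_a4F_one_apply_of_forall_lt_eq_one h]

lemma a4F_one_a4F_zero_a4F_one_a4F_one_a4F_one (x : ℕ → Fin 4) :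
    a4F 1 (a4F 0 (a4F 1 (a4F 1 (a4F 1 x)))) = a4F 1 (a4F 0 (a4F 1 x)) := by
  apply a4F_one_a4F_zero_congr
  rintro (_ | n)
  · simp
  · simp only [Nat.lt_succ_iff, forall_le_two_le_a4F_one_iff,
      forall_lt_a4F_one_a4F_one_eq_one_iff]
    exact and_congr_right fun h => by rw [a4F_one_a4F_one_apply_of_forall_lt_eq_one h]

/-- The word `3^m 2 1^j 0^∞`. -/
def pat3210 (m j : ℕ) : ℕ → Fin 4 := fun n =>
  if n < m then 3 else if n = m then 2 else if n ≤ m + j then 1 else 0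

/-- The word `1^m 0 3^j 2 0^∞`. -/
def pat10320 (m j : ℕ) : ℕ → Fin 4 := fun n =>
  if n < m then 1 else if n = m then 0 else if n ≤ m + j then 3
  else if n = m + j + 1 then 2 else 0

lemma a4F_one_pat3210 (m j : ℕ) : a4F 1 (pat3210 m j) = pat10320 m j := by
  have hne : ∀ k < m + j + 1, pat3210 m j k ≠ 0 := fun k hk => by
    unfold pat3210; split_ifs <;> first | decide | omega
  funext n
  rw [a4F_one_apply_of_first_zero hne (by unfold pat3210; split_ifs <;> first | rfl | omega)]
  unfold pat3210 pat10320; split_ifs <;> first | rfl | omega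

lemma a4F_one_pat10320 (m j : ℕ) : a4F 1 (pat10320 m j) = pat3210 m (j + 1) := by
  have hne : ∀ k < m, pat10320 m j k ≠ 0 := fun k hk => by simp [pat10320, hk]
  funext n
  rw [a4F_one_apply_of_first_zero hne (by simp [pat10320])]
  unfold pat3210 pat10320; split_ifs <;> first | rfl | omega

lemma iterate_iterate_two_a4F_one_pat3210_zero (m p : ℕ) :
    ((a4F 1)^[2])^[p] (pat3210 m 0) = pat3210 m p := by
  induction p with
  | zero => rfl
  | succ p ih =>
    rw [Function.iterate_succ_apply', ih, Function.iterate_succ_apply, Function.iterate_one,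
      a4F_one_pat3210, a4F_one_pat10320]

lemma a4F_zero_pat3210 (m j : ℕ) :
    a4F 0 (pat3210 m j) = fun n => if n ≤ m then 1 else 0 := by
  funext n
  rw [a4F_zero_apply]
  unfold pat3210; split_ifs <;> first | rfl | omega

lemma a4F_one_a4F_zero_eq_pat3210 {u : ℕ → Fin 4} {m : ℕ} (hhigh : ∀ k < m, 2 ≤ u k)
    (hlow : ¬ 2 ≤ u m) : a4F 1 (a4F 0 u) = pat3210 m 0 := by
  funext n
  simp only [a4F_one_a4F_zero_apply, forall_lt_iff_le_of_forall_lt_of_not hhigh hlow]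
  unfold pat3210
  rcases lt_trichotomy n m with hn | rfl | hn
  · have := hhigh n hn
    simp only [hn.le, hn, if_true]
    revert this; generalize u n = x
    revert x; decide
  · simp only [le_rfl, lt_irrefl, if_true, if_false]
    revert hlow; generalize u n = x
    revert x; decide
  · simp only [hn.not_ge, hn.not_gt, hn.ne', if_false]
    split_ifs <;> first | rfl | omega

lemma a4F_one_a4F_zero_eq_const {u : ℕ → Fin 4} (h : ∀ k, 2 ≤ u k) :
    a4F 1 (a4F 0 u) = fun _ => 3 := by
  funext n
  rw [a4F_one_a4F_zero_apply, if_pos fun k _ => h k]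
  have := h n
  revert this; generalize u n = x
  revert x; decide

lemma a4F_one_const {c : Fin 4} (hc : c ≠ 0) : a4F 1 (fun _ => c) = fun _ => c + 2 :=
  funext fun _ => a4F_one_apply_of_forall_lt_ne_zero fun _ _ => hc

lemma iterate_two_a4F_one_const_three : (a4F 1)^[2] (fun _ => 3) = fun _ => 3 := by
  rw [Function.iterate_succ_apply, Function.iterate_one, a4F_one_const (by decide),
    a4F_one_const (by decide)]
  rfl

lemma a4F_zero_iterate_a4F_one_a4F_zero (p : ℕ) (u : ℕ → Fin 4) :
    a4F 0 ((a4F 1)^[2 * p + 1] (a4F 0 u)) = a4F 0 (a4F 1 (a4F 0 u)) := by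
  rw [Function.iterate_succ_apply, Function.iterate_mul]
  by_cases hlow : ∃ m, ¬ 2 ≤ u m
  · have hhigh : ∀ k < Nat.find hlow, 2 ≤ u k := fun k hk => not_not.mp (Nat.find_min hlow hk)
    rw [a4F_one_a4F_zero_eq_pat3210 hhigh (Nat.find_spec hlow),
      iterate_iterate_two_a4F_one_pat3210_zero,
      a4F_zero_pat3210, a4F_zero_pat3210]
  · simp only [not_exists, not_not] at hlow
    rw [a4F_one_a4F_zero_eq_const hlow, Function.iterate_fixed iterate_two_a4F_one_const_three]

/-- The defining relations of the semigroup `S_{A₄}` hold among the automatic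
transformations `f0, f1` of `A₄` (products composed from right to left). -/
theorem relations_a4 :
    a4F 0 ∘ a4F 0 ∘ a4F 0 = a4F 0 ∘ a4F 0 ∧
    a4F 0 ∘ a4F 0 ∘ a4F 1 = a4F 0 ∘ a4F 0 ∧
    a4F 1 ∘ a4F 0 ∘ a4F 1 ∘ a4F 1 ∘ a4F 0 = a4F 1 ∘ a4F 0 ∘ a4F 0 ∧
    a4F 1 ∘ a4F 0 ∘ a4F 1 ∘ a4F 1 ∘ a4F 1 = a4F 1 ∘ a4F 0 ∘ a4F 1 ∧
    ∀ p : ℕ, 1 ≤ p → a4F 0 ∘ (a4F 1)^[2 * p + 1] ∘ a4F 0 = a4F 0 ∘ a4F 1 ∘ a4F 0 := by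
  refine ⟨?_, ?_, ?_, ?_, fun p _ => ?_⟩ <;> funext u <;> simp only [Function.comp_apply]
  · rw [a4F_zero_a4F_zero, a4F_zero_a4F_zero]
  · rw [a4F_zero_a4F_zero, a4F_zero_a4F_zero]
  · exact a4F_one_a4F_zero_a4F_one_a4F_one_a4F_zero u
  · exact a4F_one_a4F_zero_a4F_one_a4F_one_a4F_one u
  · exact a4F_zero_iterate_a4F_one_a4F_zero p u
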